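/- arXiv:2504.05766 — 6 statements merged into one kernel-verified Lean document; each statement's English description precedes it below -/
import Mathlib

section
/- For R ~ B(n,p) with p ∈ (0,1], n ≥ 1, k ≥ 1, the k-th raw moment satisfies E[R^k] ≥ n^k · p^{n(1 - (1-1/n)^k)}. -/
/-- The k-th raw moment of the binomial distribution B(n,p). -/
noncomputable def binomialMoment (n k : ℕ) (p : ℝ) : ℝ :=
  ∑ i ∈ Finset.range (n + 1), (n.choose i : ℝ) * p ^ i * (1 - p) ^ (n - i) * (i : ℝ) ^ k

/-- Stirling numbers of the second kind: the number of partitions of a `k`-element set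
into `j` nonempty blocks. -/
def stirling2 : ℕ → ℕ → ℕ
  | 0, 0 => 1
  | 0, _ + 1 => 0
  | _ + 1, 0 => 0
  | k + 1, j + 1 => stirling2 k j + (j + 1) * stirling2 k (j + 1)

lemma stirling2_eq_zero : ∀ {k j : ℕ}, k < j → stirling2 k j = 0
  | 0, _+1, _ => rfl
  | k+1, j+1, h => by
      have h' : k < j := Nat.lt_of_succ_lt_succ h
      show stirling2 k j + (j + 1) * stirling2 k (j + 1) = 0
      rw [stirling2_eq_zero h', stirling2_eq_zero (Nat.lt_succ_of_lt h')]
      simp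

lemma mul_descFactorial' (i j : ℕ) :
    i * i.descFactorial j = i.descFactorial (j+1) + j * i.descFactorial j := by
  rcases le_or_gt j i with h | h
  · rw [Nat.descFactorial_succ, ← Nat.add_mul, Nat.sub_add_cancel h]
  · rw [Nat.descFactorial_of_lt h, Nat.descFactorial_of_lt (Nat.lt_succ_of_lt h)]
    simp

lemma pow_eq_sum_stirling (i k : ℕ) :
    i ^ k = ∑ j ∈ Finset.range (k+1), stirling2 k j * i.descFactorial j := by
  induction k with
  | zero => simp [stirling2]
  | succ k ih =>
    have step : i ^ (k+1) = (∑ j ∈ Finset.range (k+1), stirling2 k j * i.descFactorial (j+1))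
        + ∑ j ∈ Finset.range (k+1), (j+1) * (stirling2 k (j+1) * i.descFactorial (j+1)) := by
      have e1 : i ^ (k+1) = ∑ j ∈ Finset.range (k+1),
          (stirling2 k j * i.descFactorial (j+1) + j * (stirling2 k j * i.descFactorial j)) := by
        rw [pow_succ, ih, Finset.sum_mul]
        refine Finset.sum_congr rfl fun j _ => ?_
        rw [mul_comm _ i, ← mul_assoc, mul_comm i, mul_assoc, mul_descFactorial']
        ring
      rw [e1, Finset.sum_add_distrib]
      congr 1
      rw [Finset.sum_range_succ' (fun j => j * (stirling2 k j * i.descFactorial j)) k]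
      rw [Finset.sum_range_succ (fun j => (j+1) * (stirling2 k (j+1) * i.descFactorial (j+1))) k]
      rw [stirling2_eq_zero (Nat.lt_succ_self k)]
      simp
    rw [step, Finset.sum_range_succ' (fun j => stirling2 (k+1) j * i.descFactorial j) (k+1)]
    have h0 : stirling2 (k+1) 0 = 0 := rfl
    rw [h0]
    simp only [Nat.zero_mul, Nat.add_zero, zero_mul, add_zero]
    rw [← Finset.sum_add_distrib]
    refine Finset.sum_congr rfl fun j _ => ?_
    show stirling2 k j * i.descFactorial (j+1) + (j+1) * (stirling2 k (j+1) * i.descFactorial (j+1))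
        = (stirling2 k j + (j + 1) * stirling2 k (j + 1)) * i.descFactorial (j + 1)
    ring

lemma choose_mul_descFactorial (n j m : ℕ) (h : m + j ≤ n) :
    n.choose (m+j) * (m+j).descFactorial j = n.descFactorial j * (n-j).choose m := by
  have hj : j ≤ n := le_trans (Nat.le_add_left j m) h
  have hm : m ≤ n - j := by omega
  have e1 : (m+j).descFactorial j * m.factorial = (m+j).factorial := by
    have := Nat.factorial_mul_descFactorial (Nat.le_add_left j m)
    rw [Nat.add_sub_cancel] at this
    rw [mul_comm]; exact this
  have key : n.choose (m+j) * (m+j).descFactorial j * (m.factorial * (n-j-m).factorial)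
      = n.descFactorial j * (n-j).choose m * (m.factorial * (n-j-m).factorial) := by
    calc n.choose (m+j) * (m+j).descFactorial j * (m.factorial * (n-j-m).factorial)
        = n.choose (m+j) * ((m+j).descFactorial j * m.factorial) * (n-j-m).factorial := by ring
      _ = n.choose (m+j) * (m+j).factorial * (n - (m+j)).factorial := by
          rw [e1, show n - j - m = n - (m+j) by omega]
      _ = n.factorial := Nat.choose_mul_factorial_mul_factorial h
      _ = (n-j).factorial * n.descFactorial j := (Nat.factorial_mul_descFactorial hj).symm
      _ = ((n-j).choose m * m.factorial * ((n-j)-m).factorial) * n.descFactorial j := by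
          rw [Nat.choose_mul_factorial_mul_factorial hm]
      _ = n.descFactorial j * (n-j).choose m * (m.factorial * (n-j-m).factorial) := by ring
  exact Nat.eq_of_mul_eq_mul_right (Nat.mul_pos (Nat.factorial_pos m) (Nat.factorial_pos _)) key

lemma factorialMoment (n j : ℕ) (p : ℝ) (hpq : p + (1 - p) = 1) :
    ∑ i ∈ Finset.range (n+1), (n.choose i : ℝ) * p ^ i * (1 - p) ^ (n - i) * (i.descFactorial j : ℝ)
      = (n.descFactorial j : ℝ) * p ^ j := by
  rcases le_or_gt j n with hj | hj
  · have hsub : Finset.Ico j (n+1) ⊆ Finset.range (n+1) := by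
      intro x hx; simp only [Finset.mem_Ico] at hx; simp [Finset.mem_range, hx.2]
    have hz : ∀ x ∈ Finset.range (n+1), x ∉ Finset.Ico j (n+1) →
        (n.choose x : ℝ) * p ^ x * (1 - p) ^ (n - x) * (x.descFactorial j : ℝ) = 0 := by
      intro x hx hx'
      simp only [Finset.mem_range] at hx
      simp only [Finset.mem_Ico, not_and, not_lt] at hx'
      have : x < j := by by_contra hc; exact absurd (hx' (by omega)) (by omega)
      rw [Nat.descFactorial_of_lt this]
      simp
    rw [← Finset.sum_subset hsub hz, Finset.sum_Ico_eq_sum_range]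
    have hNr : n + 1 - j = (n - j) + 1 := by omega
    rw [hNr]
    have hterm : ∀ m ∈ Finset.range ((n-j)+1),
        (n.choose (j+m) : ℝ) * p ^ (j+m) * (1 - p) ^ (n - (j+m)) * ((j+m).descFactorial j : ℝ)
          = (n.descFactorial j : ℝ) * p ^ j *
            (p ^ m * (1-p) ^ ((n-j) - m) * ((n-j).choose m : ℝ)) := by
      intro m hm
      simp only [Finset.mem_range] at hm
      have hmn : m + j ≤ n := by omega
      have hch := choose_mul_descFactorial n j m hmn
      have hch' : (n.choose (j+m) : ℝ) * ((j+m).descFactorial j : ℝ)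
          = (n.descFactorial j : ℝ) * ((n-j).choose m : ℝ) := by
        rw [show j + m = m + j by ring]
        exact_mod_cast congrArg (fun x : ℕ => (x:ℝ)) hch
      have hexp : n - (j+m) = (n-j) - m := by omega
      calc (n.choose (j+m) : ℝ) * p ^ (j+m) * (1 - p) ^ (n - (j+m)) * ((j+m).descFactorial j : ℝ)
          = ((n.choose (j+m) : ℝ) * ((j+m).descFactorial j : ℝ)) * (p ^ j * p ^ m)
              * (1 - p) ^ ((n-j) - m) := by rw [hexp, pow_add]; ring
        _ = (n.descFactorial j : ℝ) * p ^ j *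
              (p ^ m * (1-p) ^ ((n-j) - m) * ((n-j).choose m : ℝ)) := by rw [hch']; ring
    rw [Finset.sum_congr rfl hterm, ← Finset.mul_sum]
    have hb : ∑ m ∈ Finset.range ((n-j)+1),
        p ^ m * (1-p) ^ ((n-j) - m) * ((n-j).choose m : ℝ) = 1 := by
      rw [← add_pow p (1-p) (n-j), hpq, one_pow]
    rw [hb, mul_one]
  · have hz : ∀ i ∈ Finset.range (n+1),
        (n.choose i : ℝ) * p ^ i * (1 - p) ^ (n - i) * (i.descFactorial j : ℝ) = 0 := by
      intro i hi
      simp only [Finset.mem_range] at hi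
      rw [Nat.descFactorial_of_lt (by omega)]
      simp
    rw [Finset.sum_congr rfl hz, Nat.descFactorial_of_lt hj]
    simp

lemma moment_eq (n k : ℕ) (p : ℝ) :
    binomialMoment n k p
      = ∑ j ∈ Finset.range (k+1),
          ((stirling2 k j * n.descFactorial j : ℕ) : ℝ) * p ^ j := by
  unfold binomialMoment
  have h1 : ∀ i : ℕ, ((i:ℝ)) ^ k
      = ∑ j ∈ Finset.range (k+1), (stirling2 k j : ℝ) * (i.descFactorial j : ℝ) := by
    intro i
    rw [← Nat.cast_pow, pow_eq_sum_stirling i k]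
    push_cast
    rfl
  calc ∑ i ∈ Finset.range (n + 1), (n.choose i : ℝ) * p ^ i * (1 - p) ^ (n - i) * (i : ℝ) ^ k
      = ∑ i ∈ Finset.range (n + 1), ∑ j ∈ Finset.range (k+1),
          (stirling2 k j : ℝ) * ((n.choose i : ℝ) * p ^ i * (1 - p) ^ (n - i)
            * (i.descFactorial j : ℝ)) := by
        refine Finset.sum_congr rfl fun i _ => ?_
        rw [h1 i, Finset.mul_sum]
        refine Finset.sum_congr rfl fun j _ => ?_
        ring
    _ = ∑ j ∈ Finset.range (k+1), (stirling2 k j : ℝ) *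
          ∑ i ∈ Finset.range (n + 1), (n.choose i : ℝ) * p ^ i * (1 - p) ^ (n - i)
            * (i.descFactorial j : ℝ) := by
        rw [Finset.sum_comm]
        exact Finset.sum_congr rfl fun j _ => (Finset.mul_sum _ _ _).symm
    _ = ∑ j ∈ Finset.range (k+1), ((stirling2 k j * n.descFactorial j : ℕ) : ℝ) * p ^ j := by
        refine Finset.sum_congr rfl fun j _ => ?_
        rw [factorialMoment n j p (by ring)]
        push_cast
        ring

lemma key_desc (n j : ℕ) (hn : 1 ≤ n) :
    j * n.descFactorial j + n * (n-1).descFactorial j = n * n.descFactorial j := by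
  obtain ⟨m, rfl⟩ : ∃ m, n = m + 1 := ⟨n - 1, by omega⟩
  have h1 : (m+1) * m.descFactorial j = (m+1).descFactorial (j+1) :=
    (Nat.succ_descFactorial_succ m j).symm
  simp only [Nat.add_sub_cancel]
  rw [h1, Nat.descFactorial_succ]
  rcases le_or_gt j (m+1) with h | h
  · rw [← Nat.add_mul, Nat.add_sub_cancel' h]
  · rw [Nat.descFactorial_of_lt h]
    simp

lemma sum_j_stirling (n k : ℕ) (hn : 1 ≤ n) :
    ∑ j ∈ Finset.range (k+1), j * (stirling2 k j * n.descFactorial j) + n * (n-1)^k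
      = n * n^k := by
  have h1 := pow_eq_sum_stirling n k
  have h2 := pow_eq_sum_stirling (n-1) k
  calc ∑ j ∈ Finset.range (k+1), j * (stirling2 k j * n.descFactorial j) + n * (n-1)^k
      = ∑ j ∈ Finset.range (k+1), (j * (stirling2 k j * n.descFactorial j)
          + n * (stirling2 k j * (n-1).descFactorial j)) := by
        rw [Finset.sum_add_distrib, h2, Finset.mul_sum]
    _ = ∑ j ∈ Finset.range (k+1), n * (stirling2 k j * n.descFactorial j) := by
        refine Finset.sum_congr rfl fun j _ => ?_
        have hk' := key_desc n j hn
        calc j * (stirling2 k j * n.descFactorial j)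
              + n * (stirling2 k j * (n-1).descFactorial j)
            = stirling2 k j * (j * n.descFactorial j + n * (n-1).descFactorial j) := by ring
          _ = stirling2 k j * (n * n.descFactorial j) := by rw [hk']
          _ = n * (stirling2 k j * n.descFactorial j) := by ring
    _ = n * n^k := by rw [h1, Finset.mul_sum]

/-- Lower bound E[R^k] ≥ n^k · p^{n(1-(1-1/n)^k)}, with a real exponent. -/
theorem stmt5 (n k : ℕ) (hn : 1 ≤ n) (hk : 1 ≤ k) (p : ℝ) (hp0 : 0 < p) (hp1 : p ≤ 1) :
    (n : ℝ) ^ k * p ^ ((n : ℝ) * (1 - (1 - 1 / (n : ℝ)) ^ k)) ≤ binomialMoment n k p := by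
  have hN : (0:ℝ) < (n:ℝ) := by exact_mod_cast hn
  have hNk : (0:ℝ) < (n:ℝ)^k := by positivity
  set c : ℕ → ℝ := fun j => ((stirling2 k j * n.descFactorial j : ℕ) : ℝ) with hc
  have hc0 : ∀ j, 0 ≤ c j := fun j => Nat.cast_nonneg _
  have hsc : ∑ j ∈ Finset.range (k+1), c j = (n:ℝ)^k := by
    have := congrArg (fun x : ℕ => (x:ℝ)) (pow_eq_sum_stirling n k)
    push_cast at this
    simp only [hc, Nat.cast_mul]
    exact this.symm
  set w : ℕ → ℝ := fun j => c j / (n:ℝ)^k with hw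
  have hw0 : ∀ j ∈ Finset.range (k+1), 0 ≤ w j := fun j _ => div_nonneg (hc0 j) hNk.le
  have hw1 : ∑ j ∈ Finset.range (k+1), w j = 1 := by
    rw [hw]
    rw [← Finset.sum_div, hsc, div_self hNk.ne']
  have hconv : ConvexOn ℝ Set.univ (fun x : ℝ => Real.exp (Real.log p * x)) := by
    refine ⟨convex_univ, ?_⟩
    intro x _ y _ a b ha hb hab
    have h := convexOn_exp.2 (Set.mem_univ (Real.log p * x)) (Set.mem_univ (Real.log p * y))
      ha hb hab
    simp only [smul_eq_mul] at h ⊢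
    convert h using 2
    ring
  have jensen := hconv.map_sum_le (t := Finset.range (k+1)) (w := w) (p := fun j => (j:ℝ))
    hw0 hw1 (fun i _ => Set.mem_univ _)
  have hjc : ∑ j ∈ Finset.range (k+1), (j:ℝ) * c j
      = (n:ℝ) * (n:ℝ)^k - (n:ℝ) * ((n:ℝ)-1)^k := by
    have h := congrArg (fun x : ℕ => (x:ℝ)) (sum_j_stirling n k hn)
    push_cast [Nat.cast_sub hn] at h
    simp only [hc]
    push_cast
    linarith
  have hmu : ∑ j ∈ Finset.range (k+1), w j • ((j:ℝ))
      = (n:ℝ) * (1 - (1 - 1/(n:ℝ))^k) := by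
    simp only [smul_eq_mul, hw]
    have : ∑ j ∈ Finset.range (k+1), c j / (n:ℝ)^k * (j:ℝ)
        = (∑ j ∈ Finset.range (k+1), (j:ℝ) * c j) / (n:ℝ)^k := by
      rw [Finset.sum_div]
      exact Finset.sum_congr rfl fun j _ => by ring
    rw [this, hjc]
    have h1 : (1 - 1/(n:ℝ))^k = ((n:ℝ)-1)^k / (n:ℝ)^k := by
      rw [← div_pow]
      congr 1
      field_simp
    rw [h1]
    field_simp
  have hrpowj : ∀ j : ℕ, Real.exp (Real.log p * (j:ℝ)) = p ^ j := by
    intro j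
    rw [← Real.rpow_def_of_pos hp0, Real.rpow_natCast]
  have h1 : p ^ ((n:ℝ) * (1 - (1 - 1/(n:ℝ))^k))
      ≤ ∑ j ∈ Finset.range (k+1), w j * p ^ j := by
    rw [Real.rpow_def_of_pos hp0, ← hmu]
    refine le_trans jensen (le_of_eq ?_)
    refine Finset.sum_congr rfl fun j _ => ?_
    rw [smul_eq_mul, hrpowj j]
  rw [moment_eq n k p]
  calc (n:ℝ)^k * p ^ ((n:ℝ) * (1 - (1 - 1/(n:ℝ))^k))
      ≤ (n:ℝ)^k * ∑ j ∈ Finset.range (k+1), w j * p ^ j :=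
        mul_le_mul_of_nonneg_left h1 hNk.le
    _ = ∑ j ∈ Finset.range (k+1), c j * p ^ j := by
        rw [Finset.mul_sum]
        refine Finset.sum_congr rfl fun j _ => ?_
        rw [hw]
        field_simp
end

section
/- (Klarner's inequality) For Stirling numbers of the second kind, for all k ≥ 3 and all 2 ≤ j ≤ k-1: j · S(k,j) · S(k,j) ≥ (j+1) · S(k,j+1) · S(k,j-1), i.e., j · S(k,j)/S(k,j-1) ≥ (j+1) · S(k,j+1)/S(k,j). -/
lemma s2_eq_zero : ∀ k j : ℕ, k < j → stirling2 k j = 0 := by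
  intro k
  induction k with
  | zero => intro j h; cases j with
      | zero => omega
      | succ j => rfl
  | succ k ih =>
      intro j h
      cases j with
      | zero => omega
      | succ j =>
          show stirling2 k j + (j + 1) * stirling2 k (j + 1) = 0
          rw [ih j (by omega), ih (j+1) (by omega)]
          ring

lemma s2_pos : ∀ k j : ℕ, 1 ≤ j → j ≤ k → 0 < stirling2 k j := by
  intro k
  induction k with
  | zero => intro j h1 h2; omega
  | succ k ih =>
      intro j h1 h2
      cases j with
      | zero => omega
      | succ j =>
          show 0 < stirling2 k j + (j + 1) * stirling2 k (j + 1)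
          rcases Nat.eq_zero_or_pos j with hj | hj
          · subst hj
            rcases Nat.eq_zero_or_pos k with hk | hk
            · subst hk; simp [stirling2]
            · have := ih 1 le_rfl hk
              positivity
          · have := ih j hj (by omega)
            positivity

lemma klarner_aux : ∀ k j : ℕ,
    (j + 2) * stirling2 k (j + 2) * stirling2 k j
      ≤ (j + 1) * stirling2 k (j + 1) * stirling2 k (j + 1) := by
  intro k
  induction k with
  | zero =>
      intro j
      rw [s2_eq_zero 0 (j + 2) (by omega)]
      simp
  | succ k ih =>
      intro j
      cases j with
      | zero =>
          show (0 + 2) * stirling2 (k+1) 2 * stirling2 (k+1) 0 ≤ _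
          have h0 : stirling2 (k+1) 0 = 0 := rfl
          rw [h0]
          simp
      | succ m =>
          by_cases hm : k < m + 2
          · rw [s2_eq_zero (k+1) (m + 1 + 2) (by omega)]
            simp
          · -- main case: m + 3 ≤ k, so m + 2 ≤ k - 1
            push_neg at hm
            set b0 := stirling2 k m with hb0
            set b1 := stirling2 k (m+1) with hb1
            set b2 := stirling2 k (m+2) with hb2
            set b3 := stirling2 k (m+3) with hb3
            have e1 : stirling2 (k+1) (m+1) = b0 + (m+1) * b1 := rfl
            have e2 : stirling2 (k+1) (m+2) = b1 + (m+2) * b2 := rfl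
            have e3 : stirling2 (k+1) (m+3) = b2 + (m+3) * b3 := rfl
            have h1 : (m + 2) * b2 * b0 ≤ (m + 1) * b1 * b1 := ih m
            have h3 : (m + 3) * b3 * b1 ≤ (m + 2) * b2 * b2 := ih (m+1)
            have hb1p : 0 < b1 := s2_pos k (m+1) (by omega) (by omega)
            have hb2p : 0 < b2 := s2_pos k (m+2) (by omega) (by omega)
            -- D1 : b2 * b0 ≤ b1 * b1
            have h2 : b2 * b0 ≤ b1 * b1 := by nlinarith
            -- D2 : (m+3) * b3 * b0 ≤ (m+1) * b2 * b1
            have h4 : (m + 3) * b3 * b0 ≤ (m + 1) * b2 * b1 := by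
              have key : ((m + 3) * b3 * b0) * ((m+2) * b2 * b1)
                  ≤ ((m + 1) * b2 * b1) * ((m+2) * b2 * b1) := by
                calc ((m + 3) * b3 * b0) * ((m+2) * b2 * b1)
                    = ((m + 2) * b2 * b0) * ((m + 3) * b3 * b1) := by ring
                  _ ≤ ((m + 1) * b1 * b1) * ((m + 2) * b2 * b2) :=
                      Nat.mul_le_mul h1 h3
                  _ = ((m + 1) * b2 * b1) * ((m+2) * b2 * b1) := by ring
              exact Nat.le_of_mul_le_mul_right key (by positivity)
            show (m + 1 + 2) * stirling2 (k+1) (m + 1 + 2) * stirling2 (k+1) (m+1)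
                ≤ (m + 1 + 1) * stirling2 (k+1) (m + 1 + 1) * stirling2 (k+1) (m + 1 + 1)
            have e3' : stirling2 (k+1) (m + 1 + 2) = b2 + (m+3) * b3 := e3
            have e2' : stirling2 (k+1) (m + 1 + 1) = b1 + (m+2) * b2 := e2
            rw [e3', e2', e1]
            -- Δ = h1 + h2 + (m+3)(m+1) h3 + (m+3) h4 + 2 b1 b2 + (m+2) b2²
            have H3 : (m+3)*(m+1) * ((m + 3) * b3 * b1) ≤ (m+3)*(m+1) * ((m + 2) * b2 * b2) :=
              Nat.mul_le_mul_left _ h3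
            have H4 : (m+3) * ((m + 3) * b3 * b0) ≤ (m+3) * ((m + 1) * b2 * b1) :=
              Nat.mul_le_mul_left _ h4
            nlinarith [H3, H4, h1, h2, Nat.zero_le (b1 * b2), Nat.zero_le (b2 * b2)]

/-- Klarner's inequality: j·S(k,j)² ≥ (j+1)·S(k,j+1)·S(k,j-1) for 2 ≤ j ≤ k-1. -/
theorem stmt8 (k j : ℕ) (hk : 3 ≤ k) (hj2 : 2 ≤ j) (hjk : j ≤ k - 1) :
    (j + 1) * stirling2 k (j + 1) * stirling2 k (j - 1)
      ≤ j * stirling2 k j * stirling2 k j := by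
  obtain ⟨m, rfl⟩ : ∃ m, j = m + 2 := ⟨j - 2, by omega⟩
  have := klarner_aux k (m + 1)
  simpa using this
end

section
/- For fixed k ≥ 1, n ≥ 1, and p ∈ (0,1], the sequence j ↦ S(k,j) · (n)_j · p^j for 1 ≤ j ≤ min(k,n) is logarithmically concave, and as a positive log-concave sequence it is unimodal. -/
lemma stirling2_zero_succ (j : ℕ) : stirling2 0 (j+1) = 0 := rfl
lemma stirling2_succ_zero (k : ℕ) : stirling2 (k+1) 0 = 0 := rfl
lemma stirling2_succ_succ (k j : ℕ) :
    stirling2 (k+1) (j+1) = stirling2 k j + (j + 1) * stirling2 k (j+1) := rfl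

lemma stirling2_pos : ∀ k j, 1 ≤ j → j ≤ k → 0 < stirling2 k j := by
  intro k
  induction k with
  | zero => intro j h1 h2; omega
  | succ k ih =>
    intro j h1 h2
    obtain ⟨j, rfl⟩ : ∃ j', j = j' + 1 := ⟨j - 1, by omega⟩
    rw [stirling2_succ_succ]
    rcases Nat.eq_zero_or_pos j with rfl | hj
    · rcases Nat.eq_zero_or_pos k with rfl | hk
      · simp [stirling2]
      · have h := ih 1 le_rfl hk
        have : 0 < (0 + 1) * stirling2 k 1 := by simpa using h
        exact Nat.lt_of_lt_of_le this (Nat.le_add_left _ _)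
    · have h := ih j hj (by omega)
      exact Nat.lt_of_lt_of_le h (Nat.le_add_right _ _)

lemma stirling2_strongLC :
    ∀ k i j, i ≤ j →
      stirling2 k i * stirling2 k (j+2) ≤ stirling2 k (i+1) * stirling2 k (j+1) := by
  intro k
  induction k with
  | zero =>
    intro i j _
    have : stirling2 0 (j+2) = 0 := rfl
    simp [this]
  | succ k ih =>
    intro i j hij
    rcases Nat.eq_zero_or_pos i with rfl | hi
    · rw [stirling2_succ_zero]; simp
    obtain ⟨I, rfl⟩ : ∃ I, i = I + 1 := ⟨i - 1, by omega⟩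
    obtain ⟨J, rfl⟩ : ∃ J, j = J + 1 := ⟨j - 1, by omega⟩
    have hIJ : I ≤ J := by omega
    have f1 := ih I J hIJ
    have f2 := ih I (J+1) (by omega)
    have f3 := ih (I+1) (J+1) (by omega)
    have f4 : stirling2 k (I+1) * stirling2 k (J+2) ≤ stirling2 k (I+2) * stirling2 k (J+1) := by
      rcases Nat.lt_or_ge I J with h | h
      · exact ih (I+1) J h
      · have hIJ' : I = J := le_antisymm hIJ h
        subst hIJ'
        rw [Nat.mul_comm]
    simp only [stirling2_succ_succ]
    have hcoef : (I+1) * (J+1+1+1) ≤ (I+1+1) * (J+1+1) := by nlinarith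
    nlinarith [f1, mul_le_mul_right f2 (J+1+1+1),
      mul_le_mul_right f3 ((I+1) * (J+1+1+1)),
      mul_le_mul_right f4 (I+1+1),
      mul_le_mul_left hcoef (stirling2 k (I+2) * stirling2 k (J+2))]

lemma descFactorial_strongLC (n : ℕ) : ∀ i j, i ≤ j →
    n.descFactorial i * n.descFactorial (j+2) ≤ n.descFactorial (i+1) * n.descFactorial (j+1) := by
  intro i j hij
  rw [Nat.descFactorial_succ, Nat.descFactorial_succ]
  have h : n - (j+1) ≤ n - i := by omega
  calc n.descFactorial i * ((n - (j+1)) * n.descFactorial (j+1))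
      = (n - (j+1)) * (n.descFactorial i * n.descFactorial (j+1)) := by ring
    _ ≤ (n - i) * (n.descFactorial i * n.descFactorial (j+1)) := mul_le_mul_left h _
    _ = (n - i) * n.descFactorial i * n.descFactorial (j+1) := by ring

/-- The sequence a j = S(k,j)·(n)_j·p^j, 1 ≤ j ≤ min(k,n), is log-concave and unimodal. -/
theorem stmt11 (k n : ℕ) (hk : 1 ≤ k) (hn : 1 ≤ n) (p : ℝ) (hp0 : 0 < p) (hp1 : p ≤ 1) :
    (∀ j, 2 ≤ j → j ≤ min k n - 1 →
      (stirling2 k (j - 1) : ℝ) * (n.descFactorial (j - 1) : ℝ) * p ^ (j - 1) *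
          ((stirling2 k (j + 1) : ℝ) * (n.descFactorial (j + 1) : ℝ) * p ^ (j + 1))
        ≤ ((stirling2 k j : ℝ) * (n.descFactorial j : ℝ) * p ^ j) ^ 2)
    ∧ ∃ m, 1 ≤ m ∧ m ≤ min k n ∧
        (∀ i j, 1 ≤ i → i ≤ j → j ≤ m →
          (stirling2 k i : ℝ) * (n.descFactorial i : ℝ) * p ^ i
            ≤ (stirling2 k j : ℝ) * (n.descFactorial j : ℝ) * p ^ j)
        ∧ (∀ i j, m ≤ i → i ≤ j → j ≤ min k n →
          (stirling2 k j : ℝ) * (n.descFactorial j : ℝ) * p ^ j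
            ≤ (stirling2 k i : ℝ) * (n.descFactorial i : ℝ) * p ^ i) := by
  let c : ℕ → ℝ := fun j => (stirling2 k j : ℝ) * (n.descFactorial j : ℝ) * p ^ j
  have hM1 : 1 ≤ min k n := le_min hk hn
  have cnonneg : ∀ j, 0 ≤ c j := by
    intro j
    show (0:ℝ) ≤ (stirling2 k j : ℝ) * (n.descFactorial j : ℝ) * p ^ j
    positivity
  have cpos : ∀ j, 1 ≤ j → j ≤ min k n → 0 < c j := by
    intro j h1 h2
    show (0:ℝ) < (stirling2 k j : ℝ) * (n.descFactorial j : ℝ) * p ^ j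
    have hs : 0 < stirling2 k j := stirling2_pos k j h1 (le_trans h2 (min_le_left _ _))
    have hd : 0 < n.descFactorial j := Nat.pos_of_ne_zero (fun h => by
      have := Nat.descFactorial_eq_zero_iff_lt.mp h
      have := le_trans h2 (min_le_right k n)
      omega)
    have hs' : (0:ℝ) < (stirling2 k j : ℝ) := by exact_mod_cast hs
    have hd' : (0:ℝ) < (n.descFactorial j : ℝ) := by exact_mod_cast hd
    positivity
  have key : ∀ i j, i ≤ j → c i * c (j+2) ≤ c (i+1) * c (j+1) := by
    intro i j hij
    have h1 : ((stirling2 k i * stirling2 k (j+2) : ℕ) : ℝ)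
        ≤ ((stirling2 k (i+1) * stirling2 k (j+1) : ℕ) : ℝ) :=
      Nat.cast_le.mpr (stirling2_strongLC k i j hij)
    have h2 : ((n.descFactorial i * n.descFactorial (j+2) : ℕ) : ℝ)
        ≤ ((n.descFactorial (i+1) * n.descFactorial (j+1) : ℕ) : ℝ) :=
      Nat.cast_le.mpr (descFactorial_strongLC n i j hij)
    show (stirling2 k i : ℝ) * (n.descFactorial i : ℝ) * p ^ i *
        ((stirling2 k (j+2) : ℝ) * (n.descFactorial (j+2) : ℝ) * p ^ (j+2))
      ≤ (stirling2 k (i+1) : ℝ) * (n.descFactorial (i+1) : ℝ) * p ^ (i+1) *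
        ((stirling2 k (j+1) : ℝ) * (n.descFactorial (j+1) : ℝ) * p ^ (j+1))
    calc (stirling2 k i : ℝ) * (n.descFactorial i : ℝ) * p ^ i *
        ((stirling2 k (j+2) : ℝ) * (n.descFactorial (j+2) : ℝ) * p ^ (j+2))
        = ((stirling2 k i * stirling2 k (j+2) : ℕ) : ℝ)
          * ((n.descFactorial i * n.descFactorial (j+2) : ℕ) : ℝ) * p ^ (i+j+2) := by
          push_cast; ring
      _ ≤ ((stirling2 k (i+1) * stirling2 k (j+1) : ℕ) : ℝ)
          * ((n.descFactorial (i+1) * n.descFactorial (j+1) : ℕ) : ℝ) * p ^ (i+j+2) := by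
          apply mul_le_mul_of_nonneg_right _ (by positivity)
          exact mul_le_mul h1 h2 (by positivity) (by positivity)
      _ = (stirling2 k (i+1) : ℝ) * (n.descFactorial (i+1) : ℝ) * p ^ (i+1) *
          ((stirling2 k (j+1) : ℝ) * (n.descFactorial (j+1) : ℝ) * p ^ (j+1)) := by
          push_cast; ring
  have cross : ∀ i j, i ≤ j → c i * c (j+1) ≤ c (i+1) * c j := by
    intro i j hij
    rcases eq_or_lt_of_le hij with rfl | h
    · exact le_of_eq (mul_comm _ _)
    · obtain ⟨J, rfl⟩ : ∃ J, j = J + 1 := ⟨j - 1, by omega⟩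
      exact key i J (by omega)
  have down : ∀ i, 1 ≤ i → i ≤ min k n → c (i+1) ≤ c i → ∀ t, i ≤ t → c (t+1) ≤ c t := by
    intro i h1 h2 hdec t ht
    have h := cross i t ht
    have h2' : c (i+1) * c t ≤ c i * c t := mul_le_mul_of_nonneg_right hdec (cnonneg t)
    exact le_of_mul_le_mul_left (le_trans h h2') (cpos i h1 h2)
  have up : ∀ t, 1 ≤ t → t ≤ min k n → c t ≤ c (t+1) → ∀ s, s ≤ t → c s ≤ c (s+1) := by
    intro t h1 h2 hinc s hs
    have h := cross s t hs
    have h3 : c (s+1) * c t ≤ c (s+1) * c (t+1) := mul_le_mul_of_nonneg_left hinc (cnonneg _)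
    have hpos : 0 < c (t+1) := lt_of_lt_of_le (cpos t h1 h2) hinc
    exact le_of_mul_le_mul_right (le_trans h h3) hpos
  obtain ⟨m, hmmem, hmax⟩ := Finset.exists_max_image (Finset.Icc 1 (min k n)) c
    ⟨1, Finset.mem_Icc.mpr ⟨le_rfl, hM1⟩⟩
  obtain ⟨hm1, hmM⟩ := Finset.mem_Icc.mp hmmem
  have stepA : ∀ i, 1 ≤ i → i + 1 ≤ m → c i ≤ c (i+1) := by
    intro i h1 h2
    by_contra hcon
    push_neg at hcon
    have hdown := down i h1 (by omega) hcon.le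
    have chain : ∀ t, i + 1 ≤ t → c t ≤ c (i+1) := by
      intro t ht
      induction t, ht using Nat.le_induction with
      | base => exact le_rfl
      | succ t ht ih => exact le_trans (hdown t (by omega)) ih
    have h5 := chain m h2
    have h6 := hmax i (Finset.mem_Icc.mpr ⟨h1, by omega⟩)
    linarith
  have stepB : ∀ t, m ≤ t → t + 1 ≤ min k n → c (t+1) ≤ c t := by
    intro t ht htM
    by_contra hcon
    push_neg at hcon
    have hup := up t (by omega) (by omega) hcon.le
    have chain : ∀ s, m ≤ s → s ≤ t → c m ≤ c s := by
      intro s hms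
      induction s, hms using Nat.le_induction with
      | base => intro _; exact le_rfl
      | succ s hs ih => intro hst; exact le_trans (ih (by omega)) (hup s (by omega))
    have h5 := chain t ht le_rfl
    have h6 := hmax (t+1) (Finset.mem_Icc.mpr ⟨by omega, htM⟩)
    linarith
  constructor
  · intro j h2 hj
    obtain ⟨q, rfl⟩ : ∃ q, j = q + 2 := ⟨j - 2, by omega⟩
    show c (q+1) * c (q+3) ≤ c (q+2) ^ 2
    simpa [pow_two] using key (q+1) (q+1) le_rfl
  · refine ⟨m, hm1, hmM, ?_, ?_⟩
    · show ∀ i j, 1 ≤ i → i ≤ j → j ≤ m → c i ≤ c j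
      intro i j h1 hij
      induction j, hij using Nat.le_induction with
      | base => intro _; exact le_rfl
      | succ j hj ih =>
        intro hjm
        exact le_trans (ih (by omega)) (stepA j (by omega) hjm)
    · show ∀ i j, m ≤ i → i ≤ j → j ≤ min k n → c j ≤ c i
      intro i j h1 hij
      induction j, hij using Nat.le_induction with
      | base => intro _; exact le_rfl
      | succ j hj ih =>
        intro hjM
        exact le_trans (stepB j (le_trans h1 hj) hjM) (ih (by omega))
end

section
/- For R ~ B(n,p) with p ∈ (0,1) fixed, k ≥ 1, and ε > 0, if n is sufficiently large then n^k · p^{n(1 - (e+ε)^{-k/n})} ≤ E[R^k] ≤ n^k · p. -/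
lemma binom_weight_sum (n : ℕ) (p : ℝ) :
    ∑ i ∈ Finset.range (n + 1), (n.choose i : ℝ) * p ^ i * (1 - p) ^ (n - i) = 1 := by
  calc ∑ i ∈ Finset.range (n + 1), (n.choose i : ℝ) * p ^ i * (1 - p) ^ (n - i)
      = (p + (1 - p)) ^ n := by
        rw [add_pow]; exact Finset.sum_congr rfl fun i _ => by ring
    _ = 1 := by simp

lemma binom_mean (n : ℕ) (p : ℝ) :
    ∑ i ∈ Finset.range (n + 1), (n.choose i : ℝ) * p ^ i * (1 - p) ^ (n - i) * (i : ℝ)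
      = n * p := by
  cases n with
  | zero => simp
  | succ m =>
    rw [Finset.sum_range_succ']
    simp only [Nat.cast_zero, mul_zero, add_zero]
    have key : ∀ i ∈ Finset.range (m + 1),
        ((m + 1).choose (i + 1) : ℝ) * p ^ (i + 1) * (1 - p) ^ (m + 1 - (i + 1)) *
            ((i : ℕ) + 1 : ℕ)
          = ((m : ℝ) + 1) * p * ((m.choose i : ℝ) * p ^ i * (1 - p) ^ (m - i)) := by
      intro i hi
      have h := Nat.add_one_mul_choose_eq m i
      have hc : ((m + 1).choose (i + 1) : ℝ) * ((i : ℝ) + 1)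
          = ((m : ℝ) + 1) * (m.choose i : ℝ) := by
        exact_mod_cast congrArg (Nat.cast (R := ℝ)) h.symm
      have hsub : m + 1 - (i + 1) = m - i := Nat.succ_sub_succ m i
      rw [hsub]
      push_cast
      calc ((m + 1).choose (i + 1) : ℝ) * p ^ (i + 1) * (1 - p) ^ (m - i) * ((i : ℝ) + 1)
          = (((m + 1).choose (i + 1) : ℝ) * ((i : ℝ) + 1)) * p ^ (i + 1) * (1 - p) ^ (m - i) := by
            ring
        _ = ((m : ℝ) + 1) * (m.choose i : ℝ) * p ^ (i + 1) * (1 - p) ^ (m - i) := by rw [hc]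
        _ = ((m : ℝ) + 1) * p * ((m.choose i : ℝ) * p ^ i * (1 - p) ^ (m - i)) := by ring
    push_cast at key ⊢
    rw [Finset.sum_congr rfl key, ← Finset.mul_sum, binom_weight_sum m p, mul_one]

/-- For fixed p ∈ (0,1), k ≥ 1 and ε > 0, for all sufficiently large n:
n^k p^{n(1-(e+ε)^{-k/n})} ≤ E[R^k] ≤ n^k p. -/
theorem stmt16 (p : ℝ) (hp0 : 0 < p) (hp1 : p < 1) (k : ℕ) (hk : 1 ≤ k)
    (ε : ℝ) (hε : 0 < ε) :
    ∃ N : ℕ, ∀ n : ℕ, N ≤ n →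
      (n : ℝ) ^ k * p ^ ((n : ℝ) * (1 - (Real.exp 1 + ε) ^ (-(k : ℝ) / n)))
        ≤ binomialMoment n k p
      ∧ binomialMoment n k p ≤ (n : ℝ) ^ k * p := by
  have hq : (0 : ℝ) < 1 - p := by linarith
  set b : ℝ := Real.exp 1 + ε with hb
  have hb1 : Real.exp 1 < b := by simp [hb, hε]
  have hbpos : 0 < b := lt_trans (Real.exp_pos 1) hb1
  set c : ℝ := Real.log b with hc
  have hc1 : 1 < c := by
    rw [hc]
    calc (1 : ℝ) = Real.log (Real.exp 1) := (Real.log_exp 1).symm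
      _ < Real.log b := Real.log_lt_log (Real.exp_pos 1) hb1
  have hcpos : 0 < c := lt_trans one_pos hc1
  refine ⟨⌈(k : ℝ) * c / (c - 1)⌉₊ + 1, fun n hn => ?_⟩
  have hn1 : 1 ≤ n := le_trans (Nat.le_add_left 1 _) hn
  have hnpos : (0 : ℝ) < n := by exact_mod_cast hn1
  have hkn : (k : ℝ) * c / (c - 1) ≤ n := by
    have h1 : (⌈(k : ℝ) * c / (c - 1)⌉₊ : ℝ) ≤ n := by
      exact_mod_cast le_trans (Nat.le_succ _) hn
    exact le_trans (Nat.le_ceil _) h1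
  -- weights
  set w : ℕ → ℝ := fun i => (n.choose i : ℝ) * p ^ i * (1 - p) ^ (n - i) with hwdef
  have hw : ∀ i ∈ Finset.range (n + 1), 0 ≤ w i := fun i _ =>
    mul_nonneg (mul_nonneg (Nat.cast_nonneg _) (pow_nonneg hp0.le _)) (pow_nonneg hq.le _)
  have hw1 : ∑ i ∈ Finset.range (n + 1), w i = 1 := binom_weight_sum n p
  have hmean : ∑ i ∈ Finset.range (n + 1), w i * (i : ℝ) = n * p := by
    simpa using binom_mean n p
  constructor
  · -- lower bound
    have hJ : ((n : ℝ) * p) ^ k ≤ binomialMoment n k p := by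
      have := Real.pow_arith_mean_le_arith_mean_pow (Finset.range (n + 1)) w
        (fun i => (i : ℝ)) hw hw1 (fun i _ => Nat.cast_nonneg i) k
      rw [hmean] at this
      simpa [binomialMoment, hwdef] using this
    set x : ℝ := (k : ℝ) / n with hx
    have hxpos : 0 < x := div_pos (by exact_mod_cast hk) hnpos
    have hcx : c * x ≤ c - 1 := by
      have h2 : (k : ℝ) * c ≤ n * (c - 1) := by
        rw [div_le_iff₀ (by linarith : (0:ℝ) < c - 1)] at hkn
        linarith
      rw [hx]
      rw [mul_div_assoc' c _ _] -- c * (k/n) = c*k/n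
      rw [div_le_iff₀ hnpos]
      nlinarith
    have hx1 : x < 1 := by nlinarith
    -- b ^ (-x) ≤ 1 - x
    have hbx : b ^ (-(k : ℝ) / n) ≤ 1 - x := by
      have hrw : b ^ (-(k : ℝ) / n) = Real.exp (-(c * x)) := by
        rw [Real.rpow_def_of_pos hbpos, ← hc]
        rw [hx]; ring_nf
      rw [hrw, Real.exp_neg]
      have hexp : 1 + c * x ≤ Real.exp (c * x) := by
        have := Real.add_one_le_exp (c * x)
        linarith
      have hpos1 : (0 : ℝ) < 1 + c * x := by positivity
      have hinv : (Real.exp (c * x))⁻¹ ≤ (1 + c * x)⁻¹ :=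
        inv_anti₀ hpos1 hexp
      refine le_trans hinv ?_
      rw [inv_eq_one_div, div_le_iff₀ hpos1]
      nlinarith
    have hkE : (k : ℝ) ≤ (n : ℝ) * (1 - b ^ (-(k : ℝ) / n)) := by
      have : x ≤ 1 - b ^ (-(k : ℝ) / n) := by linarith
      calc (k : ℝ) = n * x := by rw [hx]; field_simp
        _ ≤ n * (1 - b ^ (-(k : ℝ) / n)) := by
            exact mul_le_mul_of_nonneg_left this hnpos.le
    have hpE : p ^ ((n : ℝ) * (1 - b ^ (-(k : ℝ) / n))) ≤ p ^ (k : ℝ) :=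
      Real.rpow_le_rpow_of_exponent_ge hp0 hp1.le hkE
    calc (n : ℝ) ^ k * p ^ ((n : ℝ) * (1 - b ^ (-(k : ℝ) / n)))
        ≤ (n : ℝ) ^ k * p ^ (k : ℝ) := by
          exact mul_le_mul_of_nonneg_left hpE (by positivity)
      _ = ((n : ℝ) * p) ^ k := by rw [Real.rpow_natCast, mul_pow]
      _ ≤ binomialMoment n k p := hJ
  · -- upper bound
    have hterm : ∀ i ∈ Finset.range (n + 1),
        w i * (i : ℝ) ^ k ≤ w i * ((n : ℝ) ^ (k - 1) * (i : ℝ)) := by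
      intro i hi
      have hin : i ≤ n := Nat.lt_succ_iff.mp (Finset.mem_range.mp hi)
      have hnat : i ^ k ≤ n ^ (k - 1) * i := by
        calc i ^ k = i ^ (k - 1) * i := by
              rw [← pow_succ, Nat.sub_add_cancel hk]
          _ ≤ n ^ (k - 1) * i := Nat.mul_le_mul_right i (Nat.pow_le_pow_left hin _)
      have : ((i : ℝ)) ^ k ≤ (n : ℝ) ^ (k - 1) * (i : ℝ) := by exact_mod_cast hnat
      exact mul_le_mul_of_nonneg_left this (hw i hi)
    calc binomialMoment n k p
        ≤ ∑ i ∈ Finset.range (n + 1), w i * ((n : ℝ) ^ (k - 1) * (i : ℝ)) :=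
          Finset.sum_le_sum hterm
      _ = (n : ℝ) ^ (k - 1) * ∑ i ∈ Finset.range (n + 1), w i * (i : ℝ) := by
          rw [Finset.mul_sum]; exact Finset.sum_congr rfl fun i _ => by ring
      _ = (n : ℝ) ^ (k - 1) * ((n : ℝ) * p) := by rw [hmean]
      _ = (n : ℝ) ^ k * p := by
          rw [← mul_assoc, ← pow_succ, Nat.sub_add_cancel hk]
end

section
/- Let β > 0, p ∈ (0,1), χ = 1/β + W_0(e^{-1/β}(1-p)/(βp)), and τ = (1 - e^{-χ})/χ. Then τ satisfies the first-order condition e^χ · χ · (β - τ) · p = 1, and 0 < τ < min(1, β). -/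
open Real

/-- With χ = 1/β + W₀(e^{-1/β}(1-p)/(βp)) (the Lambert value w being characterized as
the solution ≥ -1 of w e^w = e^{-1/β}(1-p)/(βp)) and τ = (1 - e^{-χ})/χ, the
first-order condition e^χ χ (β - τ) p = 1 holds and 0 < τ < min 1 β. -/
theorem stmt17 (β p : ℝ) (hβ : 0 < β) (hp0 : 0 < p) (hp1 : p < 1)
    (w : ℝ) (hw : -1 ≤ w)
    (hweq : w * Real.exp w = Real.exp (-(1 / β)) * (1 - p) / (β * p)) :
    Real.exp (1 / β + w) * (1 / β + w) *
        (β - (1 - Real.exp (-(1 / β + w))) / (1 / β + w)) * p = 1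
    ∧ 0 < (1 - Real.exp (-(1 / β + w))) / (1 / β + w)
    ∧ (1 - Real.exp (-(1 / β + w))) / (1 / β + w) < min 1 β := by
  have hrhs : 0 < Real.exp (-(1 / β)) * (1 - p) / (β * p) := by
    apply div_pos (mul_pos (Real.exp_pos _) (by linarith)) (mul_pos hβ hp0)
  have hw0 : 0 < w := by
    by_contra h
    push_neg at h
    have : w * Real.exp w ≤ 0 := mul_nonpos_of_nonpos_of_nonneg h (Real.exp_pos w).le
    linarith [hweq ▸ this]
  set x := 1 / β + w with hxdef
  have hx0 : 0 < x := by positivity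
  have hE : Real.exp x = Real.exp w * Real.exp (1 / β) := by
    rw [hxdef, Real.exp_add]; ring
  -- key identity: β * w * exp x * p = 1 - p
  have hkey : β * w * Real.exp x * p = 1 - p := by
    have h1 : w * Real.exp w * (β * p) = Real.exp (-(1 / β)) * (1 - p) := by
      rw [hweq]; field_simp
    have h2 : Real.exp (-(1 / β)) * Real.exp (1 / β) = 1 := by
      rw [← Real.exp_add]; simp
    have := congrArg (· * Real.exp (1 / β)) h1
    rw [hE]
    nlinarith [this, h2]
  have hEneg : Real.exp (-x) = (Real.exp x)⁻¹ := by
    rw [Real.exp_neg]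
  have hExpos := Real.exp_pos x
  have hfoc : Real.exp x * x * (β - (1 - Real.exp (-x)) / x) * p = 1 := by
    rw [hEneg]
    have hβx : β * x * Real.exp x = Real.exp x + β * w * Real.exp x := by
      rw [hxdef]; field_simp
    field_simp
    nlinarith [hkey, hβx]
  refine ⟨hfoc, ?_, ?_⟩
  · apply div_pos _ hx0
    have : Real.exp (-x) < 1 := Real.exp_lt_one_iff.mpr (by linarith)
    linarith
  · have h1 : (1 - Real.exp (-x)) / x < 1 := by
      rw [div_lt_one hx0]
      have := Real.add_one_lt_exp (x := -x) (by linarith)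
      linarith
    have hβτ : (1 - Real.exp (-x)) / x < β := by
      by_contra h
      push_neg at h
      have hle : β - (1 - Real.exp (-x)) / x ≤ 0 := by linarith
      have : Real.exp x * x * (β - (1 - Real.exp (-x)) / x) * p ≤ 0 :=
        mul_nonpos_of_nonpos_of_nonneg
          (mul_nonpos_of_nonneg_of_nonpos (by positivity) hle) hp0.le
      linarith
    exact lt_min h1 hβτ
end

section
/- For β > 0 and p ∈ (0,1), the equation e^χ χ(β - τ)p = 1 together with the substitution τ = (1-e^{-χ})/χ is equivalent to (χ - 1/β) e^{χ - 1/β} = e^{-1/β}(1-p)/(βp), whose unique solution with χ - 1/β > -1 is χ = 1/β + W_0(e^{-1/β}(1-p)/(βp)). -/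
open Real

lemma xexp_strictMonoOn : StrictMonoOn (fun x : ℝ => x * Real.exp x) (Set.Ici (-1)) := by
  have : ∀ x ∈ interior (Set.Ici (-1 : ℝ)), 0 < deriv (fun x : ℝ => x * Real.exp x) x := by
    intro x hx
    rw [interior_Ici] at hx
    have hd : deriv (fun x : ℝ => x * Real.exp x) x = (x + 1) * Real.exp x := by
      have h1 : HasDerivAt (fun x : ℝ => x * Real.exp x) (1 * Real.exp x + x * Real.exp x) x :=
        (hasDerivAt_id x).mul (Real.hasDerivAt_exp x)
      rw [h1.deriv]; ring
    rw [hd]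
    have : 0 < x + 1 := by linarith [hx.out]
    positivity
  exact strictMonoOn_of_deriv_pos (convex_Ici _)
    (Continuous.continuousOn (by continuity)) this

/-- For β > 0 and p ∈ (0,1): with the substitution τ = (1-e^{-χ})/χ, the equation
e^χ χ (β-τ) p = 1 is equivalent to (χ - 1/β) e^{χ-1/β} = e^{-1/β}(1-p)/(βp); and the
unique solution with χ - 1/β > -1 is χ = 1/β + W₀(e^{-1/β}(1-p)/(βp)), the Lambert
value w = W₀(…) being characterized as the solution ≥ -1 of w e^w = e^{-1/β}(1-p)/(βp). -/
theorem stmt18 (β p : ℝ) (hβ : 0 < β) (hp0 : 0 < p) (hp1 : p < 1)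
    (w : ℝ) (hw : -1 ≤ w)
    (hweq : w * Real.exp w = Real.exp (-(1 / β)) * (1 - p) / (β * p)) :
    (∀ χ : ℝ, χ ≠ 0 →
      (Real.exp χ * χ * (β - (1 - Real.exp (-χ)) / χ) * p = 1
        ↔ (χ - 1 / β) * Real.exp (χ - 1 / β) = Real.exp (-(1 / β)) * (1 - p) / (β * p)))
    ∧ ∀ χ : ℝ, -1 < χ - 1 / β →
        (χ - 1 / β) * Real.exp (χ - 1 / β) = Real.exp (-(1 / β)) * (1 - p) / (β * p) →
        χ = 1 / β + w := by
  have hβ' : β ≠ 0 := ne_of_gt hβ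
  have hp' : p ≠ 0 := ne_of_gt hp0
  constructor
  · intro χ hχ
    have hE : Real.exp χ ≠ 0 := (Real.exp_pos χ).ne'
    have hEb : Real.exp (-(1 / β)) ≠ 0 := (Real.exp_pos _).ne'
    have hmul : Real.exp (-χ) * Real.exp χ = 1 := by
      rw [← Real.exp_add]; simp
    have hsub : Real.exp (χ - 1 / β) = Real.exp χ * Real.exp (-(1 / β)) := by
      rw [← Real.exp_add]; ring_nf
    set F := Real.exp (-(1 / β)) with hF
    set E := Real.exp χ with hEdef
    set G := Real.exp (-χ) with hGdef
    rw [hsub]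
    constructor
    · intro h
      field_simp at h ⊢
      have key : χ * (E * χ * β * p - E * p + p) = χ * 1 := by
        linear_combination χ * h - (χ * p) * hmul
      have key2 := mul_left_cancel₀ hχ key
      linear_combination key2
    · intro h
      field_simp at h ⊢
      have key : (F * β) * (E * χ * β * p - E * p + p) = (F * β) * 1 := by
        linear_combination (F * β) * h
      have key2 := mul_left_cancel₀ (mul_ne_zero hEb hβ') key
      linear_combination key2 + p * hmul
  · intro χ hgt heq
    have := xexp_strictMonoOn.injOn
      (Set.mem_Ici.mpr (le_of_lt hgt)) (Set.mem_Ici.mpr hw)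
      (by simpa using heq.trans hweq.symm)
    linarith
end
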